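/- arXiv:1810.01203 — 2 statements merged into one kernel-verified Lean document; each statement's English description precedes it below -/
import Mathlib

section
/- If a subcollection W of Y satisfies L_m(θ;W) → 0 in probability as n → ∞ for a fixed θ ∈ Θ with θ ≠ θ^0, then P(L_n(θ;Y) ≥ 1) → 0 as n → ∞. -/
open MeasureTheory Filter

/-!
Write `π` for the coordinate projection `y ↦ W`, `S = {L_n(θ) ≥ 1}` and, for `ε > 0`,
`B = {|L_m(θ)| ≥ ε}`. Outside `π⁻¹ B`, either `g_{θ⁰}(W) = 0`, an event of probability zero,
or `g_θ(W) < ε g_{θ⁰}(W)`. On `S` we have `f_{θ⁰} ≤ f_θ`, so the last event has probability at most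
`∫_{g_θ < ε g_{θ⁰}} g_θ dμ ≤ ε`, using only that `g_θ` is the marginal of `f_θ`. Hence
`P(L_n(θ) ≥ 1) ≤ P(|L_m(θ)| ≥ ε) + ε` for every `n`, and the first term tends to zero.
-/

lemma ENNReal.tendsto_nhds_zero_of_le_add_ofReal {ι : Type*} {l : Filter ι} {a : ι → ENNReal}
    {b : ℝ → ι → ENNReal} (hb : ∀ ε > (0 : ℝ), Tendsto (b ε) l (nhds 0))
    (hab : ∀ ε > (0 : ℝ), ∀ i, a i ≤ b ε i + ENNReal.ofReal ε) :
    Tendsto a l (nhds 0) := by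
  rw [ENNReal.tendsto_nhds_zero]
  intro η hη
  have hη2 : (0 : ENNReal) < η / 2 := ENNReal.half_pos hη.ne'
  obtain ⟨ε, -, hε, hεη⟩ := ENNReal.lt_iff_exists_real_btwn.1 hη2
  have hε : 0 < ε := ENNReal.ofReal_pos.1 hε
  filter_upwards [ENNReal.tendsto_nhds_zero.1 (hb ε hε) _ hη2] with i hi
  calc a i ≤ b ε i + ENNReal.ofReal ε := hab ε hε i
    _ ≤ η / 2 + η / 2 := add_le_add hi hεη.le
    _ = η := ENNReal.add_halves η

lemma ENNReal.ofReal_le_ofReal_of_one_le_div {a b : ℝ} (h : 1 ≤ a / b) :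
    ENNReal.ofReal b ≤ ENNReal.ofReal a := by
  rcases le_or_gt b 0 with hb | hb
  · simp [ENNReal.ofReal_of_nonpos hb]
  · exact ENNReal.ofReal_le_ofReal ((one_le_div hb).1 h)

lemma le_abs_div_or_lt_mul_or_eq_zero {a b : ℝ} (hb : 0 ≤ b) (ε : ℝ) :
    ε ≤ |a / b| ∨ a < ε * b ∨ b = 0 := by
  rcases hb.eq_or_lt with hb0 | hb
  · exact Or.inr (Or.inr hb0.symm)
  rcases le_or_gt ε (a / b) with h | h
  · exact Or.inl (h.trans (le_abs_self _))
  · exact Or.inr (Or.inl ((div_lt_iff₀ hb).1 h))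

section Marginal

variable {α β : Type*} [MeasurableSpace α] [MeasurableSpace β] {ν : Measure α} {μ : Measure β}

lemma setLIntegral_inter_one_le_div_le {f₀ f₁ : α → ℝ} (hf₁ : Measurable f₁) (A : Set α) :
    ∫⁻ y in {y | 1 ≤ f₁ y / f₀ y} ∩ A, ENNReal.ofReal (f₀ y) ∂ν
      ≤ ∫⁻ y in A, ENNReal.ofReal (f₁ y) ∂ν :=
  calc ∫⁻ y in {y | 1 ≤ f₁ y / f₀ y} ∩ A, ENNReal.ofReal (f₀ y) ∂ν
      ≤ ∫⁻ y in {y | 1 ≤ f₁ y / f₀ y} ∩ A, ENNReal.ofReal (f₁ y) ∂ν :=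
        setLIntegral_mono hf₁.ennreal_ofReal fun _ hy =>
          ENNReal.ofReal_le_ofReal_of_one_le_div hy.1
    _ ≤ ∫⁻ y in A, ENNReal.ofReal (f₁ y) ∂ν := lintegral_mono_set Set.inter_subset_right

lemma setLIntegral_lt_mul_le {g₀ g₁ : β → ℝ} (hg₀ : Measurable g₀) {ε : ℝ} (hε : 0 ≤ ε) :
    ∫⁻ w in {w | g₁ w < ε * g₀ w}, ENNReal.ofReal (g₁ w) ∂μ
      ≤ ENNReal.ofReal ε * ∫⁻ w, ENNReal.ofReal (g₀ w) ∂μ :=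
  calc ∫⁻ w in {w | g₁ w < ε * g₀ w}, ENNReal.ofReal (g₁ w) ∂μ
      ≤ ∫⁻ w in {w | g₁ w < ε * g₀ w}, ENNReal.ofReal ε * ENNReal.ofReal (g₀ w) ∂μ :=
        setLIntegral_mono (measurable_const.mul hg₀.ennreal_ofReal) fun _ hw => by
          rw [← ENNReal.ofReal_mul hε]
          exact ENNReal.ofReal_le_ofReal (le_of_lt hw)
    _ = ENNReal.ofReal ε * ∫⁻ w in {w | g₁ w < ε * g₀ w}, ENNReal.ofReal (g₀ w) ∂μ :=
        lintegral_const_mul _ hg₀.ennreal_ofReal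
    _ ≤ ENNReal.ofReal ε * ∫⁻ w, ENNReal.ofReal (g₀ w) ∂μ :=
        mul_le_mul_right (setLIntegral_le_lintegral _ _) _

lemma setLIntegral_ofReal_eq_zero {g : β → ℝ} (hg : Measurable g) :
    ∫⁻ w in {w | g w = 0}, ENNReal.ofReal (g w) ∂μ = 0 :=
  (setLIntegral_eq_zero_iff (hg (measurableSet_singleton 0)) hg.ennreal_ofReal).2 <|
    ae_of_all _ fun w (hw : g w = 0) => by rw [hw, ENNReal.ofReal_zero]

lemma setLIntegral_one_le_div_le {π : α → β} {f₀ f₁ : α → ℝ} {g₀ g₁ : β → ℝ}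
    (hf₁ : Measurable f₁) (hg₀ : Measurable g₀) (hg₁ : Measurable g₁)
    (hg₀_nonneg : ∀ w, 0 ≤ g₀ w)
    (hmarg₀ : ∀ B, MeasurableSet B →
      ∫⁻ y in π ⁻¹' B, ENNReal.ofReal (f₀ y) ∂ν = ∫⁻ w in B, ENNReal.ofReal (g₀ w) ∂μ)
    (hmarg₁ : ∀ B, MeasurableSet B →
      ∫⁻ y in π ⁻¹' B, ENNReal.ofReal (f₁ y) ∂ν = ∫⁻ w in B, ENNReal.ofReal (g₁ w) ∂μ)
    {ε : ℝ} (hε : 0 ≤ ε) :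
    ∫⁻ y in {y | 1 ≤ f₁ y / f₀ y}, ENNReal.ofReal (f₀ y) ∂ν
      ≤ ∫⁻ y in π ⁻¹' {w | ε ≤ |g₁ w / g₀ w|}, ENNReal.ofReal (f₀ y) ∂ν
        + ENNReal.ofReal ε * ∫⁻ y, ENNReal.ofReal (f₀ y) ∂ν := by
  set S := {y | 1 ≤ f₁ y / f₀ y}
  set Bbig := {w | ε ≤ |g₁ w / g₀ w|}
  set Bsmall := {w | g₁ w < ε * g₀ w}
  set Bnull := {w | g₀ w = 0}
  have hcover : S ⊆ π ⁻¹' Bbig ∪ (S ∩ π ⁻¹' Bsmall) ∪ π ⁻¹' Bnull := fun y hy => by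
    rcases le_abs_div_or_lt_mul_or_eq_zero (a := g₁ (π y)) (hg₀_nonneg (π y)) ε with h | h | h
    exacts [Or.inl (Or.inl h), Or.inl (Or.inr ⟨hy, h⟩), Or.inr h]
  have hsmall : ∫⁻ y in S ∩ π ⁻¹' Bsmall, ENNReal.ofReal (f₀ y) ∂ν
      ≤ ENNReal.ofReal ε * ∫⁻ y, ENNReal.ofReal (f₀ y) ∂ν := by
    have htotal := hmarg₀ Set.univ MeasurableSet.univ
    rw [Set.preimage_univ, Measure.restrict_univ, Measure.restrict_univ] at htotal
    calc ∫⁻ y in S ∩ π ⁻¹' Bsmall, ENNReal.ofReal (f₀ y) ∂ν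
        ≤ ∫⁻ y in π ⁻¹' Bsmall, ENNReal.ofReal (f₁ y) ∂ν :=
          setLIntegral_inter_one_le_div_le hf₁ _
      _ = ∫⁻ w in Bsmall, ENNReal.ofReal (g₁ w) ∂μ :=
          hmarg₁ _ (measurableSet_lt hg₁ (measurable_const.mul hg₀))
      _ ≤ ENNReal.ofReal ε * ∫⁻ y, ENNReal.ofReal (f₀ y) ∂ν :=
          htotal ▸ setLIntegral_lt_mul_le hg₀ hε
  have hnull : ∫⁻ y in π ⁻¹' Bnull, ENNReal.ofReal (f₀ y) ∂ν = 0 := by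
    rw [hmarg₀ Bnull (hg₀ (measurableSet_singleton 0))]
    exact setLIntegral_ofReal_eq_zero hg₀
  calc ∫⁻ y in S, ENNReal.ofReal (f₀ y) ∂ν
      ≤ ∫⁻ y in π ⁻¹' Bbig ∪ (S ∩ π ⁻¹' Bsmall) ∪ π ⁻¹' Bnull, ENNReal.ofReal (f₀ y) ∂ν :=
        lintegral_mono_set hcover
    _ ≤ ∫⁻ y in π ⁻¹' Bbig, ENNReal.ofReal (f₀ y) ∂ν
          + ∫⁻ y in S ∩ π ⁻¹' Bsmall, ENNReal.ofReal (f₀ y) ∂ν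
          + ∫⁻ y in π ⁻¹' Bnull, ENNReal.ofReal (f₀ y) ∂ν :=
        (lintegral_union_le _ _ _).trans (add_le_add_left (lintegral_union_le _ _ _) _)
    _ ≤ _ := by
        rw [hnull, add_zero]
        exact add_le_add_right hsmall _

end Marginal

theorem statement1_general
    {Ω : Type*} [MeasurableSpace Ω] (P : Measure Ω) [IsProbabilityMeasure P]
    {T : Type*} (Θ : Set T) (θ0 : T) (hθ0 : θ0 ∈ Θ)
    -- the full data and its densities
    (Y : (n : ℕ) → Ω → (Fin n → ℝ)) (hY : ∀ n, Measurable (Y n))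
    (ν : (n : ℕ) → Measure (Fin n → ℝ))
    (f : (n : ℕ) → T → (Fin n → ℝ) → ℝ)
    (hfmeas : ∀ n, ∀ θ ∈ Θ, Measurable (f n θ))
    (hf0 : ∀ n, Measure.map (Y n) P = (ν n).withDensity fun y => ENNReal.ofReal (f n θ0 y))
    -- the subcollections, with  m n → ∞ components
    (m : ℕ → ℕ)
    (idx : (n : ℕ) → Fin (m n) → Fin n)
    (W : (n : ℕ) → Ω → (Fin (m n) → ℝ)) (hW : ∀ n, W n = fun ω j => Y n ω (idx n j))
    (μW : (n : ℕ) → Measure (Fin (m n) → ℝ))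
    (g : (n : ℕ) → T → (Fin (m n) → ℝ) → ℝ)
    (hgmeas : ∀ n, ∀ θ ∈ Θ, Measurable (g n θ))
    (hgpos : ∀ n, ∀ θ ∈ Θ, ∀ w, 0 ≤ g n θ w)
    (hmarg : ∀ n, ∀ θ ∈ Θ, ∀ B : Set (Fin (m n) → ℝ), MeasurableSet B →
      ∫⁻ y in (fun y : Fin n → ℝ => fun j => y (idx n j)) ⁻¹' B, ENNReal.ofReal (f n θ y) ∂(ν n)
        = ∫⁻ w in B, ENNReal.ofReal (g n θ w) ∂(μW n))
    -- the likelihood ratios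
    (Ln : (n : ℕ) → T → Ω → ℝ) (hLn : ∀ n θ ω, Ln n θ ω = f n θ (Y n ω) / f n θ0 (Y n ω))
    (Lm : (n : ℕ) → T → Ω → ℝ) (hLm : ∀ n θ ω, Lm n θ ω = g n θ (W n ω) / g n θ0 (W n ω))
    -- the fixed parameter θ ≠ θ0, for which Lm(θ; W) → 0 in probability
    (θ : T) (hθ : θ ∈ Θ)
    (hprob : ∀ ε > (0 : ℝ), Tendsto (fun n => P {ω | ε ≤ |Lm n θ ω|}) atTop (nhds 0)) :
    Tendsto (fun n => P {ω | 1 ≤ Ln n θ ω}) atTop (nhds 0) := by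
  refine ENNReal.tendsto_nhds_zero_of_le_add_ofReal hprob fun ε hε n => ?_
  have hP : ∀ A, MeasurableSet A →
      P (Y n ⁻¹' A) = ∫⁻ y in A, ENNReal.ofReal (f n θ0 y) ∂(ν n) := fun A hA => by
    rw [← Measure.map_apply (hY n) hA, hf0 n, withDensity_apply _ hA]
  have htotal : ∫⁻ y, ENNReal.ofReal (f n θ0 y) ∂(ν n) = 1 := by
    simpa using (hP Set.univ MeasurableSet.univ).symm
  have hπ : Measurable fun y : Fin n → ℝ => fun j => y (idx n j) := by fun_prop
  have hf₀ := hfmeas n θ0 hθ0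
  have hf₁ := hfmeas n θ hθ
  have hg₀ := hgmeas n θ0 hθ0
  have hg₁ := hgmeas n θ hθ
  have hS : MeasurableSet {y | 1 ≤ f n θ y / f n θ0 y} :=
    measurableSet_le measurable_const (hf₁.div hf₀)
  have hB : MeasurableSet {w | ε ≤ |g n θ w / g n θ0 w|} :=
    measurableSet_le measurable_const (hg₁.div hg₀).abs
  calc P {ω | 1 ≤ Ln n θ ω}
      = ∫⁻ y in {y | 1 ≤ f n θ y / f n θ0 y}, ENNReal.ofReal (f n θ0 y) ∂(ν n) := by
        rw [← hP _ hS]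
        simp only [hLn]
        rfl
    _ ≤ _ := setLIntegral_one_le_div_le hf₁ hg₀ hg₁ (hgpos n θ0 hθ0)
        (hmarg n θ0 hθ0) (hmarg n θ hθ) hε.le
    _ = P {ω | ε ≤ |Lm n θ ω|} + ENNReal.ofReal ε := by
        rw [htotal, mul_one, ← hP _ (hπ hB)]
        simp only [hLm, hW n]
        rfl

/-- Setup: for each `n`, `Y n` is a random vector in `ℝⁿ` with density `f n θ` w.r.t. a
σ-finite `ν n` (true parameter `θ0`), and `W n` is a subcollection of `Y n` with
`m n` components (`m n → ∞`), obtained by selecting coordinates via the injection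
`idx n`, with density `g n θ` w.r.t. `μW n` compatible with `f` by marginalization.
`Ln n θ ω` and `Lm n θ ω` are the likelihood ratios of the full data and of the
subcollection.  Conclusion: for a fixed `θ ∈ Θ` with `θ ≠ θ0`, if
`Lm n θ → 0` in probability as `n → ∞` then `P (Ln n θ ≥ 1) → 0`. -/
theorem statement1
    {Ω : Type*} [MeasurableSpace Ω] (P : Measure Ω) [IsProbabilityMeasure P]
    {T : Type*} [MetricSpace T] (Θ : Set T) (θ0 : T) (hθ0 : θ0 ∈ Θ)
    -- the full data and its densities
    (Y : (n : ℕ) → Ω → (Fin n → ℝ)) (hY : ∀ n, Measurable (Y n))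
    (ν : (n : ℕ) → Measure (Fin n → ℝ)) (hν : ∀ n, SigmaFinite (ν n))
    (f : (n : ℕ) → T → (Fin n → ℝ) → ℝ)
    (hfmeas : ∀ n, ∀ θ ∈ Θ, Measurable (f n θ))
    (hfpos : ∀ n, ∀ θ ∈ Θ, ∀ y, 0 ≤ f n θ y)
    (hf0 : ∀ n, Measure.map (Y n) P = (ν n).withDensity fun y => ENNReal.ofReal (f n θ0 y))
    -- the subcollections, with  m n → ∞ components
    (m : ℕ → ℕ) (hm : Tendsto m atTop atTop)
    (idx : (n : ℕ) → Fin (m n) → Fin n) (hidx : ∀ n, Function.Injective (idx n))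
    (W : (n : ℕ) → Ω → (Fin (m n) → ℝ)) (hW : ∀ n, W n = fun ω j => Y n ω (idx n j))
    (μW : (n : ℕ) → Measure (Fin (m n) → ℝ)) (hμW : ∀ n, SigmaFinite (μW n))
    (g : (n : ℕ) → T → (Fin (m n) → ℝ) → ℝ)
    (hgmeas : ∀ n, ∀ θ ∈ Θ, Measurable (g n θ))
    (hgpos : ∀ n, ∀ θ ∈ Θ, ∀ w, 0 ≤ g n θ w)
    (hmarg : ∀ n, ∀ θ ∈ Θ, ∀ B : Set (Fin (m n) → ℝ), MeasurableSet B →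
      ∫⁻ y in (fun y : Fin n → ℝ => fun j => y (idx n j)) ⁻¹' B, ENNReal.ofReal (f n θ y) ∂(ν n)
        = ∫⁻ w in B, ENNReal.ofReal (g n θ w) ∂(μW n))
    -- the likelihood ratios
    (Ln : (n : ℕ) → T → Ω → ℝ) (hLn : ∀ n θ ω, Ln n θ ω = f n θ (Y n ω) / f n θ0 (Y n ω))
    (Lm : (n : ℕ) → T → Ω → ℝ) (hLm : ∀ n θ ω, Lm n θ ω = g n θ (W n ω) / g n θ0 (W n ω))
    -- the fixed parameter θ ≠ θ0, for which Lm(θ; W) → 0 in probability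
    (θ : T) (hθ : θ ∈ Θ) (hne : θ ≠ θ0)
    (hprob : ∀ ε > (0 : ℝ), Tendsto (fun n => P {ω | ε ≤ |Lm n θ ω|}) atTop (nhds 0)) :
    Tendsto (fun n => P {ω | 1 ≤ Ln n θ ω}) atTop (nhds 0) :=
  statement1_general P Θ θ0 hθ0 Y hY ν f hfmeas hf0 m idx W hW μW g hgmeas hgpos hmarg Ln hLn Lm hLm
    θ hθ hprob
end

section
/- In the logit-normal MGLMM, let c(t) = log(1+e^t) and p_i(β_2, θ_d) = E[c'(x_{i,i}^T β_2 + √(θ_d/θ_d^0)(U_i^{(1)} + U_i^{(2)}))], the marginal success probability of Y_{i,i,2} under parameters (β_2, θ_d), where the expectation is under the true parameter θ^0. If θ^0 is an interior point of Θ and ε > 0 is small enough that the closed ball B̄_ε(θ^0) consists of interior points of Θ, then there exists a constant c_1 > 0, not depending on i, N, or θ, such that |p_i(β_2^0, θ_d^0) − p_i(β_2, θ_d^0)| ≥ c_1 |x_{i,i}^T(β_2 − β_2^0)| for all θ = (β_1, β_2, θ_d) ∈ B̄_ε(θ^0) and all i. -/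
/-!
`p_i(·, θ_d⁰)` is `t ↦ E σ(t + g)` with `σ = c'` the logistic function and `g` the scaled random
effect `U_i^{(1)} + U_i^{(2)}`. Since `σ' = σ (1 - σ) ≥ e^{-|t|} / 4`, on `[-M, M]` every shifted
copy `σ(· + g)` has slope at least `e^{-M} e^{-|g|} / 4`, so the average has slope at least
`c₁ = e^{-M} E[e^{-|g|}] / 4 > 0`. By Cauchy–Schwarz and `‖x_{i,i}‖ ≤ 1`, both `x_{i,i}ᵀ β₂` and
`x_{i,i}ᵀ β₂⁰` lie in `[-M, M]` for `M = ‖θ⁰‖ + ε`.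
-/

open MeasureTheory Filter ProbabilityTheory

noncomputable section

/-- The logistic function `c'(t) = 1/(1+e^{−t})`, the derivative of the Bernoulli
cumulant function `c(t) = log(1+e^t)`. -/
def logistic (t : ℝ) : ℝ := 1 / (1 + Real.exp (-t))

/-- The parameter set of the logit-normal MGLMM:
`Θ = ℝ^p × ℝ^p × (0,∞) ⊆ ℝ^d`, `d = 2p+1` (0-based coordinates). -/
def mglmmΘ (p : ℕ) : Set (EuclideanSpace ℝ (Fin (2 * p + 1))) :=
  {θ | 0 < θ ⟨2 * p, by omega⟩}

/-- The first regression coefficient vector `β₁ = (θ_1, …, θ_p)`. -/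
def mglmmβ1 (p : ℕ) (θ : EuclideanSpace ℝ (Fin (2 * p + 1))) : Fin p → ℝ :=
  fun j => θ ⟨j.1, by have := j.2; omega⟩

/-- The second regression coefficient vector `β₂ = (θ_{p+1}, …, θ_{2p})`. -/
def mglmmβ2 (p : ℕ) (θ : EuclideanSpace ℝ (Fin (2 * p + 1))) : Fin p → ℝ :=
  fun j => θ ⟨p + j.1, by have := j.2; omega⟩

/-- The random-effect variance parameter `θ_d`. -/
def mglmmVar (p : ℕ) (θ : EuclideanSpace ℝ (Fin (2 * p + 1))) : ℝ :=
  θ ⟨2 * p, by omega⟩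

/-- `p_i(β₂, θ_d) = E[c'(x_{i,i}ᵀ β₂ + √(θ_d/θ_d⁰)(U_i^{(1)} + U_i^{(2)}))]`, the
marginal success probability of `Y_{i,i,2}` under parameters `(β₂, θ_d)`, where the
expectation is under the true parameter (`U_i^{(1)}, U_i^{(2)} ∼ N(0, θ_d⁰)`
independently). -/
def mglmmP {p : ℕ} (x : ℕ → EuclideanSpace ℝ (Fin p)) (θd0 : ℝ)
    (β2 : Fin p → ℝ) (θd : ℝ) (i : ℕ) : ℝ :=
  ∫ u : ℝ × ℝ,
    logistic ((∑ j, x i j * β2 j) + Real.sqrt (θd / θd0) * (u.1 + u.2))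
    ∂((gaussianReal 0 θd0.toNNReal).prod (gaussianReal 0 θd0.toNNReal))

open Real

theorem logistic_eq_sigmoid : logistic = sigmoid := by
  funext t
  rw [logistic, sigmoid_def, one_div]

theorem exp_neg_abs_div_four_le_sigmoid_mul (x : ℝ) :
    exp (-|x|) / 4 ≤ sigmoid x * (1 - sigmoid x) := by
  wlog hx : 0 ≤ x generalizing x
  · simpa [sigmoid_neg, mul_comm] using this (-x) (by linarith)
  have half_le : 1 / 2 ≤ sigmoid x := by
    simpa [sigmoid_zero] using sigmoid_le hx
  -- `1 - σ x = σ (-x) = σ x * e^{-x}`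
  rw [abs_of_nonneg hx, ← sigmoid_neg, ← sigmoid_mul_rexp_neg]
  have hσ : 1 / 4 ≤ sigmoid x * sigmoid x := by nlinarith
  nlinarith [exp_pos (-x)]

theorem sigmoid_sub_ge_of_abs_le {M a b : ℝ} (ha : |a| ≤ M) (hb : |b| ≤ M) (hab : a ≤ b) :
    exp (-M) / 4 * (b - a) ≤ sigmoid b - sigmoid a := by
  refine (convex_Icc (-M) M).mul_sub_le_image_sub_of_le_deriv continuous_sigmoid.continuousOn
    differentiable_sigmoid.differentiableOn (fun t ht => ?_) a (abs_le.1 ha) b (abs_le.1 hb) hab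
  rw [interior_Icc] at ht
  rw [deriv_sigmoid]
  refine le_trans ?_ (exp_neg_abs_div_four_le_sigmoid_mul t)
  gcongr
  exact (abs_lt.2 ht).le

section SigmoidMean

variable {Ω : Type*} [MeasurableSpace Ω] (μ : Measure Ω) [IsFiniteMeasure μ] {g : Ω → ℝ}

theorem integrable_sigmoid_add (hg : Measurable g) (t : ℝ) :
    Integrable (fun ω => sigmoid (t + g ω)) μ :=
  .of_bound (continuous_sigmoid.measurable.comp (hg.const_add t)).aestronglyMeasurable 1
    (ae_of_all _ fun ω => by
      rw [norm_of_nonneg (sigmoid_nonneg _)]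
      exact sigmoid_le_one _)

theorem integrable_exp_neg_abs (hg : Measurable g) :
    Integrable (fun ω => exp (-|g ω|)) μ :=
  .of_bound (hg.abs.neg.exp).aestronglyMeasurable 1
    (ae_of_all _ fun ω => by
      rw [norm_of_nonneg (exp_pos _).le, exp_le_one_iff, neg_nonpos]
      exact abs_nonneg _)

theorem mul_abs_sub_le_abs_integral_sigmoid_add_sub (hg : Measurable g) {M a b : ℝ}
    (ha : |a| ≤ M) (hb : |b| ≤ M) :
    exp (-M) / 4 * (∫ ω, exp (-|g ω|) ∂μ) * |b - a|
      ≤ |∫ ω, sigmoid (b + g ω) ∂μ - ∫ ω, sigmoid (a + g ω) ∂μ| := by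
  wlog hab : a ≤ b generalizing a b
  · rw [abs_sub_comm, abs_sub_comm (∫ ω, _ ∂μ)]
    exact this hb ha (le_of_not_ge hab)
  have pointwise (ω : Ω) : exp (-M) / 4 * (b - a) * exp (-|g ω|)
      ≤ sigmoid (b + g ω) - sigmoid (a + g ω) := by
    have hshift (t : ℝ) (ht : |t| ≤ M) : |t + g ω| ≤ M + |g ω| :=
      (abs_add_le _ _).trans (by linarith)
    calc exp (-M) / 4 * (b - a) * exp (-|g ω|)
        = exp (-(M + |g ω|)) / 4 * ((b + g ω) - (a + g ω)) := by
          rw [neg_add, exp_add]; ring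
      _ ≤ sigmoid (b + g ω) - sigmoid (a + g ω) :=
          sigmoid_sub_ge_of_abs_le (hshift a ha) (hshift b hb) (by linarith)
  have integrated := integral_mono ((integrable_exp_neg_abs μ hg).const_mul _)
    ((integrable_sigmoid_add μ hg b).sub (integrable_sigmoid_add μ hg a)) pointwise
  rw [integral_const_mul, integral_sub' (integrable_sigmoid_add μ hg b)
    (integrable_sigmoid_add μ hg a)] at integrated
  rw [abs_of_nonneg (sub_nonneg.2 hab)]
  calc exp (-M) / 4 * (∫ ω, exp (-|g ω|) ∂μ) * (b - a)
      = exp (-M) / 4 * (b - a) * ∫ ω, exp (-|g ω|) ∂μ := by ring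
    _ ≤ _ := integrated.trans (le_abs_self _)

end SigmoidMean

theorem norm_toLp_mglmmβ2_le (p : ℕ) (θ : EuclideanSpace ℝ (Fin (2 * p + 1))) :
    ‖WithLp.toLp 2 (mglmmβ2 p θ)‖ ≤ ‖θ‖ := by
  let e : Fin p ↪ Fin (2 * p + 1) :=
    ⟨fun j => ⟨p + j, by omega⟩, fun j k h => Fin.ext (by simpa using h)⟩
  rw [← sq_le_sq₀ (norm_nonneg _) (norm_nonneg _), EuclideanSpace.real_norm_sq_eq,
    EuclideanSpace.real_norm_sq_eq]
  calc ∑ j, mglmmβ2 p θ j ^ 2 = ∑ k ∈ Finset.univ.map e, θ k ^ 2 := by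
        rw [Finset.sum_map]; rfl
    _ ≤ ∑ k, θ k ^ 2 := Finset.sum_le_univ_sum_of_nonneg fun k => sq_nonneg _

theorem abs_sum_mul_mglmmβ2_le {p : ℕ} (x : EuclideanSpace ℝ (Fin p))
    (θ : EuclideanSpace ℝ (Fin (2 * p + 1))) :
    |∑ j, x j * mglmmβ2 p θ j| ≤ ‖x‖ * ‖θ‖ :=
  calc |∑ j, x j * mglmmβ2 p θ j| = |inner ℝ x (WithLp.toLp 2 (mglmmβ2 p θ))| := by
        simp [PiLp.inner_apply, mul_comm]
    _ ≤ ‖x‖ * ‖WithLp.toLp 2 (mglmmβ2 p θ)‖ := abs_real_inner_le_norm _ _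
    _ ≤ ‖x‖ * ‖θ‖ := by gcongr; exact norm_toLp_mglmmβ2_le p θ

theorem statement15_general
    (p : ℕ) (x : ℕ → EuclideanSpace ℝ (Fin p)) (hx : ∀ i, ‖x i‖ ≤ 1)
    (θ0 : EuclideanSpace ℝ (Fin (2 * p + 1)))
    (ε : ℝ) :
    ∃ c1 > (0 : ℝ), ∀ θ ∈ Metric.closedBall θ0 ε, ∀ i : ℕ,
      c1 * |∑ j, x i j * (mglmmβ2 p θ j - mglmmβ2 p θ0 j)|
        ≤ |mglmmP x (mglmmVar p θ0) (mglmmβ2 p θ0) (mglmmVar p θ0) i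
            - mglmmP x (mglmmVar p θ0) (mglmmβ2 p θ) (mglmmVar p θ0) i| := by
  set v := mglmmVar p θ0
  set μ := (gaussianReal 0 v.toNNReal).prod (gaussianReal 0 v.toNNReal)
  set g : ℝ × ℝ → ℝ := fun u => √(v / v) * (u.1 + u.2)
  have hg : Measurable g := by fun_prop
  refine ⟨exp (-(‖θ0‖ + ε)) / 4 * ∫ u, exp (-|g u|) ∂μ,
    mul_pos (by positivity) (integral_exp_pos (integrable_exp_neg_abs μ hg)), fun θ hθ i => ?_⟩
  have hε : 0 ≤ ε := dist_nonneg.trans hθ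
  have hsum_le (θ' : EuclideanSpace ℝ (Fin (2 * p + 1))) (hθ' : ‖θ'‖ ≤ ‖θ0‖ + ε) :
      |∑ j, x i j * mglmmβ2 p θ' j| ≤ ‖θ0‖ + ε :=
    (abs_sum_mul_mglmmβ2_le (x i) θ').trans
      (by nlinarith [hx i, norm_nonneg (x i), norm_nonneg θ'])
  simp only [mglmmP, logistic_eq_sigmoid, mul_sub, Finset.sum_sub_distrib]
  rw [abs_sub_comm (∫ u, _ ∂μ)]
  exact mul_abs_sub_le_abs_integral_sigmoid_add_sub μ hg (hsum_le θ0 (by linarith))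
    (hsum_le θ (norm_le_of_mem_closedBall hθ))

/-- for the logit-normal MGLMM.
If `θ0` is an interior point of `Θ` and `ε > 0` is small enough that the closed ball
`B̄_ε(θ0)` consists of interior points of `Θ`, then there is a constant `c₁ > 0`, not
depending on `i`, `N` or `θ`, such that
`|p_i(β₂⁰, θ_d⁰) − p_i(β₂, θ_d⁰)| ≥ c₁ |x_{i,i}ᵀ(β₂ − β₂⁰)|` for all
`θ = (β₁, β₂, θ_d) ∈ B̄_ε(θ0)` and all `i`.  (Here `x i` denotes `x_{i,i}`, with
`‖x_{i,i}‖ ≤ 1`.) -/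
theorem statement15
    (p : ℕ) (x : ℕ → EuclideanSpace ℝ (Fin p)) (hx : ∀ i, ‖x i‖ ≤ 1)
    (θ0 : EuclideanSpace ℝ (Fin (2 * p + 1))) (hθ0 : θ0 ∈ interior (mglmmΘ p))
    (ε : ℝ) (hε : 0 < ε)
    (hball : Metric.closedBall θ0 ε ⊆ interior (mglmmΘ p)) :
    ∃ c1 > (0 : ℝ), ∀ θ ∈ Metric.closedBall θ0 ε, ∀ i : ℕ,
      c1 * |∑ j, x i j * (mglmmβ2 p θ j - mglmmβ2 p θ0 j)|
        ≤ |mglmmP x (mglmmVar p θ0) (mglmmβ2 p θ0) (mglmmVar p θ0) i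
            - mglmmP x (mglmmVar p θ0) (mglmmβ2 p θ) (mglmmVar p θ0) i| :=
  statement15_general p x hx θ0 ε

end
end
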